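/- arXiv:2307.06729 — 5 statements merged into one kernel-verified Lean document; each statement's English description precedes it below -/
import Mathlib

section
/- Landscape inequality: Let C be an invertible real N×N matrix whose inverse has all entries nonnegative. Define the landscape vector u by Cu = 𝟙, where 𝟙 is the all-ones vector. Then for any eigenpair (λ, v) with Cv = λv, λ > 0, and v ≠ 0, it holds that |v_i| / ‖v‖_∞ ≤ λ u_i for each i = 1,…,N. -/
open Matrix

theorem stmt_4 {N : ℕ} (C : Matrix (Fin N) (Fin N) ℝ)
    (hC : IsUnit C) (hinv : ∀ i j, 0 ≤ C⁻¹ i j)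
    (u : Fin N → ℝ) (hu : C *ᵥ u = 1)
    (lam : ℝ) (hlam : 0 < lam) (v : Fin N → ℝ) (hv : v ≠ 0)
    (heig : C *ᵥ v = lam • v) (i : Fin N) :
    |v i| / ‖v‖ ≤ lam * u i := by
  have hdet : IsUnit C.det := (Matrix.isUnit_iff_isUnit_det C).mp hC
  have hinvC : C⁻¹ * C = 1 := Matrix.nonsing_inv_mul C hdet
  have hv' : v = lam • (C⁻¹ *ᵥ v) := by
    have h := congrArg (fun w => C⁻¹ *ᵥ w) heig
    simpa [Matrix.mulVec_mulVec, hinvC, Matrix.mulVec_smul] using h.symm |>.symm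
  have hu' : u = C⁻¹ *ᵥ (1 : Fin N → ℝ) := by
    have h := congrArg (fun w => C⁻¹ *ᵥ w) hu
    simpa [Matrix.mulVec_mulVec, hinvC] using h.symm |>.symm
  have hnorm : 0 < ‖v‖ := norm_pos_iff.mpr hv
  rw [div_le_iff₀ hnorm]
  have hvi : v i = lam * ∑ j, C⁻¹ i j * v j := by
    have := congrFun hv' i
    simpa [Matrix.mulVec, dotProduct] using this
  have hui : u i = ∑ j, C⁻¹ i j := by
    have := congrFun hu' i
    simpa [Matrix.mulVec, dotProduct] using this
  have hbound : |v i| ≤ lam * (u i * ‖v‖) := by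
    rw [hvi, abs_mul, abs_of_pos hlam]
    apply mul_le_mul_of_nonneg_left _ hlam.le
    calc |∑ j, C⁻¹ i j * v j| ≤ ∑ j, |C⁻¹ i j * v j| := Finset.abs_sum_le_sum_abs _ _
      _ ≤ ∑ j, C⁻¹ i j * ‖v‖ := by
          apply Finset.sum_le_sum
          intro j _
          rw [abs_mul, abs_of_nonneg (hinv i j)]
          exact mul_le_mul_of_nonneg_left (by simpa using norm_le_pi_norm v j) (hinv i j)
      _ = u i * ‖v‖ := by rw [hui, Finset.sum_mul]
  linarith [hbound]
end

section
/- Ostrowski comparison theorem: Let A be a real N×N matrix whose comparison matrix A‡, defined by (A‡)_ii = |A_ii| and (A‡)_ij = -|A_ij| for i ≠ j, is symmetric positive definite. Then A is invertible and |(A⁻¹)_{ij}| ≤ ((A‡)⁻¹)_{ij} for all 1 ≤ i, j ≤ N. -/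
/-!
Row by row, the triangle inequality gives `A‡ |u| ≤ |A u|` componentwise. A positive definite
matrix `M` with nonpositive off-diagonal entries is inverse monotone (`M x ≤ M y → x ≤ y`): if
`M x ≥ 0`, the negative part `x⁻` satisfies `x⁻ ⬝ M x⁻ = x⁻ ⬝ M x⁺ - x⁻ ⬝ M x ≤ 0`, so `x⁻ = 0`.
Applied to `M = A‡` this gives `A u = 0 → |u| ≤ 0`, and `|A⁻¹ b| ≤ A‡⁻¹ |b|`; take `b = e_j`.
-/

open Matrix

/-- The comparison matrix `A‡`: diagonal entries `|A i i|`, off-diagonal entries `-|A i j|`. -/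
def compMat {N : ℕ} (A : Matrix (Fin N) (Fin N) ℝ) : Matrix (Fin N) (Fin N) ℝ :=
  fun i j => if i = j then |A i i| else -|A i j|

namespace Matrix

variable {n : Type*} [Fintype n] {M : Matrix n n ℝ}

theorem dotProduct_mulVec_nonpos_of_offDiag_nonpos (hM : ∀ i j, i ≠ j → M i j ≤ 0)
    {p q : n → ℝ} (hp : 0 ≤ p) (hq : 0 ≤ q) (hpq : ∀ i, q i * p i = 0) :
    q ⬝ᵥ M *ᵥ p ≤ 0 := by
  simp only [dotProduct, mulVec, Finset.mul_sum]
  refine Finset.sum_nonpos fun i _ => Finset.sum_nonpos fun j _ => ?_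
  obtain rfl | hij := eq_or_ne i j
  · rw [mul_left_comm, hpq, mul_zero]
  · rw [mul_left_comm]
    exact mul_nonpos_of_nonpos_of_nonneg (hM i j hij) (mul_nonneg (hq i) (hp j))

theorem PosDef.nonneg_of_mulVec_nonneg (hpd : M.PosDef) (hM : ∀ i j, i ≠ j → M i j ≤ 0)
    {x : n → ℝ} (hx : 0 ≤ M *ᵥ x) : 0 ≤ x := by
  rw [← negPart_eq_zero]
  by_contra hne
  have hpos : 0 < x⁻ ⬝ᵥ M *ᵥ x⁻ := by simpa using hpd.dotProduct_mulVec_pos hne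
  have hcross : x⁻ ⬝ᵥ M *ᵥ x⁺ ≤ 0 := by
    refine dotProduct_mulVec_nonpos_of_offDiag_nonpos hM (posPart_nonneg x) (negPart_nonneg x)
      fun i => ?_
    obtain h | h := le_total (x i) 0
    · simp [posPart_eq_zero.mpr h]
    · simp [negPart_eq_zero.mpr h]
  have hx' : 0 ≤ x⁻ ⬝ᵥ M *ᵥ x := dotProduct_nonneg_of_nonneg (negPart_nonneg x) hx
  have hsplit : x⁻ = x⁺ - x := by rw [← sub_sub_cancel x⁺ x⁻, posPart_sub_negPart]
  rw [hsplit, mulVec_sub, dotProduct_sub, ← hsplit] at hpos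
  linarith

theorem PosDef.le_of_mulVec_le (hpd : M.PosDef) (hM : ∀ i j, i ≠ j → M i j ≤ 0)
    {x y : n → ℝ} (h : M *ᵥ x ≤ M *ᵥ y) : x ≤ y :=
  sub_nonneg.mp <| hpd.nonneg_of_mulVec_nonneg hM <| by rwa [mulVec_sub, sub_nonneg]

end Matrix

section compMat

variable {N : ℕ}

theorem compMat_offDiag_nonpos (A : Matrix (Fin N) (Fin N) ℝ) :
    ∀ i j, i ≠ j → compMat A i j ≤ 0 := by
  intro i j hij
  simp [compMat, hij]

theorem compMat_mulVec_abs_le (A : Matrix (Fin N) (Fin N) ℝ) (u : Fin N → ℝ) :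
    compMat A *ᵥ |u| ≤ |A *ᵥ u| := by
  intro i
  have hsplit : ∀ v : Fin N → ℝ, ∑ j, v j = v i + ∑ j ∈ Finset.univ.erase i, v j := fun v =>
    (Finset.add_sum_erase _ _ (Finset.mem_univ i)).symm
  simp only [mulVec, dotProduct, Pi.abs_apply]
  rw [hsplit, hsplit]
  have hdiag : compMat A i i * |u i| = |A i i * u i| := by simp [compMat, abs_mul]
  have hoff : ∑ j ∈ Finset.univ.erase i, compMat A i j * |u j|
      = -∑ j ∈ Finset.univ.erase i, |A i j * u j| := by
    rw [← Finset.sum_neg_distrib]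
    refine Finset.sum_congr rfl fun j hj => ?_
    simp [compMat, (Finset.ne_of_mem_erase hj).symm, abs_mul]
  rw [hdiag, hoff]
  calc |A i i * u i| - ∑ j ∈ Finset.univ.erase i, |A i j * u j|
      ≤ |A i i * u i| - |∑ j ∈ Finset.univ.erase i, A i j * u j| :=
        sub_le_sub_left (Finset.abs_sum_le_sum_abs _ _) _
    _ ≤ |A i i * u i + ∑ j ∈ Finset.univ.erase i, A i j * u j| :=
        abs_sub_abs_le_abs_add _ _

theorem isUnit_of_compMat_posDef {A : Matrix (Fin N) (Fin N) ℝ} (hpd : (compMat A).PosDef) : IsUnit A := by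
  rw [isUnit_iff_isUnit_det, isUnit_iff_ne_zero, Ne, ← exists_mulVec_eq_zero_iff]
  rintro ⟨v, hv, hAv⟩
  have hle : |v| ≤ 0 :=
    hpd.le_of_mulVec_le (compMat_offDiag_nonpos A) (by simpa [hAv] using compMat_mulVec_abs_le A v)
  exact hv (funext fun i => abs_nonpos_iff.mp (hle i))

theorem abs_inv_mulVec_le_of_compMat_posDef {A : Matrix (Fin N) (Fin N) ℝ}
    (hpd : (compMat A).PosDef) (b : Fin N → ℝ) :
    |A⁻¹ *ᵥ b| ≤ (compMat A)⁻¹ *ᵥ |b| := by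
  have hA : A * A⁻¹ = 1 := mul_nonsing_inv _ <|
    (isUnit_iff_isUnit_det A).mp (isUnit_of_compMat_posDef hpd)
  have hM : compMat A * (compMat A)⁻¹ = 1 := mul_nonsing_inv _ <|
    (isUnit_iff_isUnit_det _).mp hpd.isUnit
  refine hpd.le_of_mulVec_le (compMat_offDiag_nonpos A) ?_
  calc compMat A *ᵥ |A⁻¹ *ᵥ b| ≤ |A *ᵥ (A⁻¹ *ᵥ b)| := compMat_mulVec_abs_le A _
    _ = compMat A *ᵥ ((compMat A)⁻¹ *ᵥ |b|) := by
      rw [mulVec_mulVec, mulVec_mulVec, hA, hM, one_mulVec, one_mulVec]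

end compMat

theorem stmt_6 {N : ℕ} (A : Matrix (Fin N) (Fin N) ℝ)
    (hpd : (compMat A).PosDef) :
    IsUnit A ∧ ∀ i j, |A⁻¹ i j| ≤ (compMat A)⁻¹ i j := by
  refine ⟨isUnit_of_compMat_posDef hpd, fun i j => ?_⟩
  have he : |(Pi.single j 1 : Fin N → ℝ)| = Pi.single j 1 :=
    abs_of_nonneg (Pi.single_nonneg.mpr zero_le_one)
  simpa [he, mulVec_single_one] using abs_inv_mulVec_le_of_compMat_posDef hpd (Pi.single j 1) i
end

section
/- Let A be a real symmetric positive definite N×N matrix and suppose B is a real N×N matrix with entrywise bound |(A⁻¹)_{ij}| ≤ (B⁻¹)_{ij} for all i, j, where B is invertible with entrywise nonnegative inverse. If Av = κv with κ > 0 and v ≠ 0, and w solves Bw = 𝟙, then |v_i| ≤ κ ‖v‖_∞ w_i for each i. -/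
open Matrix

theorem stmt_10 {N : ℕ} (A B : Matrix (Fin N) (Fin N) ℝ)
    (hA : A.PosDef) (hB : IsUnit B)
    (hBinv : ∀ i j, 0 ≤ B⁻¹ i j)
    (hbound : ∀ i j, |A⁻¹ i j| ≤ B⁻¹ i j)
    (κ : ℝ) (hκ : 0 < κ) (v : Fin N → ℝ) (hv : v ≠ 0)
    (heig : A *ᵥ v = κ • v)
    (w : Fin N → ℝ) (hw : B *ᵥ w = 1) (i : Fin N) :
    |v i| ≤ κ * ‖v‖ * w i := by
  have hAdet : IsUnit A.det := isUnit_iff_ne_zero.mpr (ne_of_gt hA.det_pos)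
  have hAinv : A⁻¹ * A = 1 := Matrix.nonsing_inv_mul A hAdet
  have hv' : v = κ • (A⁻¹ *ᵥ v) := by
    calc v = (A⁻¹ * A) *ᵥ v := by rw [hAinv, Matrix.one_mulVec]
    _ = A⁻¹ *ᵥ (A *ᵥ v) := by rw [Matrix.mulVec_mulVec]
    _ = A⁻¹ *ᵥ (κ • v) := by rw [heig]
    _ = κ • (A⁻¹ *ᵥ v) := by rw [Matrix.mulVec_smul]
  have hw' : w = B⁻¹ *ᵥ (1 : Fin N → ℝ) := by
    have hBdet : IsUnit B.det := (Matrix.isUnit_iff_isUnit_det B).mp hB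
    calc w = (B⁻¹ * B) *ᵥ w := by rw [Matrix.nonsing_inv_mul B hBdet, Matrix.one_mulVec]
    _ = B⁻¹ *ᵥ (B *ᵥ w) := by rw [Matrix.mulVec_mulVec]
    _ = B⁻¹ *ᵥ (1 : Fin N → ℝ) := by rw [hw]
  have hvi : v i = κ * ∑ j, A⁻¹ i j * v j := by
    conv_lhs => rw [hv']
    simp [Matrix.mulVec, dotProduct]
  have hwi : w i = ∑ j, B⁻¹ i j := by
    conv_lhs => rw [hw']
    simp [Matrix.mulVec, dotProduct]
  rw [hvi, hwi, abs_mul, abs_of_pos hκ, Finset.mul_sum]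
  simp only [mul_assoc]
  rw [← Finset.mul_sum]
  refine mul_le_mul_of_nonneg_left ?_ hκ.le
  calc |∑ j, A⁻¹ i j * v j| ≤ ∑ j, |A⁻¹ i j * v j| := Finset.abs_sum_le_sum_abs _ _
  _ ≤ ∑ j, ‖v‖ * B⁻¹ i j := by
      refine Finset.sum_le_sum fun j _ => ?_
      rw [abs_mul, mul_comm]
      exact mul_le_mul (norm_le_pi_norm v j) (hbound i j) (abs_nonneg _)
        (norm_nonneg v)
end

section
/- Let C be a real N×N matrix with nonnegative-entried inverse, u = C⁻¹𝟙 the landscape vector, and (λ, v) an eigenpair of C with λ > 0, v ≠ 0. If i* is an index achieving |v_{i*}| = ‖v‖_∞, then λ u_{i*} ≥ 1. -/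
open Matrix

theorem stmt_17 {N : ℕ} (C : Matrix (Fin N) (Fin N) ℝ)
    (hC : IsUnit C) (hinv : ∀ i j, 0 ≤ C⁻¹ i j)
    (u : Fin N → ℝ) (hu : u = C⁻¹ *ᵥ 1)
    (lam : ℝ) (hlam : 0 < lam) (v : Fin N → ℝ) (hv : v ≠ 0)
    (heig : C *ᵥ v = lam • v)
    (istar : Fin N) (histar : |v istar| = ‖v‖) :
    1 ≤ lam * u istar := by
  have hvpos : 0 < ‖v‖ := norm_pos_iff.mpr hv
  have hvid : v = lam • (C⁻¹ *ᵥ v) := by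
    have := congrArg (fun w => C⁻¹ *ᵥ w) heig
    simpa [mulVec_mulVec, nonsing_inv_mul C (isUnit_iff_isUnit_det C |>.mp hC),
      mulVec_smul] using this
  have key : |v istar| ≤ lam * u istar * ‖v‖ := by
    have : v istar = lam * ∑ j, C⁻¹ istar j * v j := by
      conv_lhs => rw [hvid]
      simp [mulVec, dotProduct, mul_comm]
    rw [this, abs_mul, abs_of_pos hlam, hu]
    have h1 : |∑ j, C⁻¹ istar j * v j| ≤ ∑ j, C⁻¹ istar j * ‖v‖ := by
      refine (Finset.abs_sum_le_sum_abs _ _).trans (Finset.sum_le_sum fun j _ => ?_)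
      rw [abs_mul, abs_of_nonneg (hinv istar j)]
      exact mul_le_mul_of_nonneg_left (norm_le_pi_norm v j) (hinv istar j)
    calc lam * |∑ j, C⁻¹ istar j * v j| ≤ lam * ∑ j, C⁻¹ istar j * ‖v‖ := by
          exact mul_le_mul_of_nonneg_left h1 hlam.le
      _ = lam * (C⁻¹ *ᵥ 1) istar * ‖v‖ := by
          simp [mulVec, dotProduct, Finset.sum_mul, mul_assoc]
  rw [histar] at key
  nlinarith [key, hvpos]
end

section
/- Let C be an invertible real N×N matrix whose inverse has nonnegative entries and let u = C⁻¹𝟙. Then every positive eigenvalue λ of C satisfies λ ≥ 1/‖u‖_∞. -/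
open Matrix

theorem stmt_18 {N : ℕ} (C : Matrix (Fin N) (Fin N) ℝ)
    (hC : IsUnit C) (hinv : ∀ i j, 0 ≤ C⁻¹ i j)
    (u : Fin N → ℝ) (hu : u = C⁻¹ *ᵥ 1)
    (lam : ℝ) (hlam : 0 < lam) (v : Fin N → ℝ) (hv : v ≠ 0)
    (heig : C *ᵥ v = lam • v) :
    1 / ‖u‖ ≤ lam := by
  subst hu
  have hdet : IsUnit C.det := (Matrix.isUnit_iff_isUnit_det C).mp hC
  have hv' : v = lam • (C⁻¹ *ᵥ v) := by
    have h := congrArg (fun w => C⁻¹ *ᵥ w) heig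
    simpa [Matrix.mulVec_mulVec, Matrix.nonsing_inv_mul C hdet, Matrix.mulVec_smul] using h
  have hvpos : 0 < ‖v‖ := norm_pos_iff.mpr hv
  have key : ‖v‖ ≤ lam * (‖C⁻¹ *ᵥ (1 : Fin N → ℝ)‖ * ‖v‖) := by
    calc ‖v‖ = lam * ‖C⁻¹ *ᵥ v‖ := by
          conv_lhs => rw [hv']
          rw [norm_smul, Real.norm_eq_abs, abs_of_pos hlam]
    _ ≤ lam * (‖C⁻¹ *ᵥ (1 : Fin N → ℝ)‖ * ‖v‖) := by
        apply mul_le_mul_of_nonneg_left _ hlam.le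
        apply (pi_norm_le_iff_of_nonneg (by positivity)).mpr
        intro i
        calc ‖(C⁻¹ *ᵥ v) i‖ = |∑ j, C⁻¹ i j * v j| := by
              simp [Matrix.mulVec, dotProduct, Real.norm_eq_abs]
        _ ≤ ∑ j, C⁻¹ i j * ‖v‖ := by
            refine (Finset.abs_sum_le_sum_abs _ _).trans (Finset.sum_le_sum fun j _ => ?_)
            rw [abs_mul, abs_of_nonneg (hinv i j)]
            exact mul_le_mul_of_nonneg_left
              ((Real.norm_eq_abs (v j)) ▸ norm_le_pi_norm v j) (hinv i j)
        _ = (C⁻¹ *ᵥ (1 : Fin N → ℝ)) i * ‖v‖ := by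
            simp [Matrix.mulVec, dotProduct, Finset.sum_mul]
        _ ≤ ‖C⁻¹ *ᵥ (1 : Fin N → ℝ)‖ * ‖v‖ := by
            apply mul_le_mul_of_nonneg_right _ (norm_nonneg v)
            exact (le_abs_self _).trans
              ((Real.norm_eq_abs _) ▸ norm_le_pi_norm (C⁻¹ *ᵥ (1 : Fin N → ℝ)) i)
  have h1 : 1 ≤ lam * ‖C⁻¹ *ᵥ (1 : Fin N → ℝ)‖ := by
    nlinarith [key, hvpos]
  have hupos : 0 < ‖C⁻¹ *ᵥ (1 : Fin N → ℝ)‖ := by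
    nlinarith [norm_nonneg (C⁻¹ *ᵥ (1 : Fin N → ℝ))]
  rw [div_le_iff₀ hupos]
  linarith
end
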